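/- Let G be the ONCF-gadget and let c' : {g1,g2,g3} → {red, blue} be a partial 2-coloring such that c'(g_i) = blue for at least one i ∈ {1,2,3}. Then c' can be extended to a 2-coloring c of all of {g1,…,g10} satisfying: (1) for every i with 4 ≤ i ≤ 9 the open neighborhood N(g_i) contains a uniquely colored vertex (there exists u ∈ N(g_i) with c(u) ≠ c(w) for all w ∈ N(g_i), w ≠ u); and (2) c(g9) = blue, c(g8) = red, c(g4) = c(g5) = blue, and c(g10) = blue. -/

import Mathlib

inductive Color where
  | red
  | blue
deriving DecidableEq

/-- The ONCF-gadget: a graph on ten vertices `g1, …, g10` (here indexed `0, …, 9`)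
with edges g1g4, g2g4, g2g5, g3g5, g4g6, g5g7, g6g8, g7g8, g8g9, g9g10. -/
def oncfGadget : SimpleGraph (Fin 10) :=
  SimpleGraph.fromEdgeSet
    {s(0, 3), s(1, 3), s(1, 4), s(2, 4), s(3, 5),
     s(4, 6), s(5, 7), s(6, 7), s(7, 8), s(8, 9)}

/-! With `g4 = g5 = g9 = g10` blue and `g8` red, the neighbourhoods `{g4, g8}`, `{g5, g8}` and
`{g8, g10}` are bichromatic pairs. Colour `g6` blue exactly when `g1 = g2` is red, and `g7`
blue exactly when `g2 = g3` is red; then none of `N(g4) = {g1, g2, g6}`, `N(g5) = {g2, g3, g7}`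
is monochromatic, and `N(g8) = {g6, g7, g9}` is monochromatic only if `g1 = g2 = g3` is red.
In a 2-colouring a set of at most three vertices that is not monochromatic has a uniquely
coloured vertex. -/

def HasUniquelyColored {V α : Type*} (c : V → α) (s : Set V) : Prop :=
  ∃ u ∈ s, ∀ w ∈ s, w ≠ u → c w ≠ c u

section HasUniquelyColored

variable {V α : Type*}

theorem hasUniquelyColored_pair {c : V → α} {u w : V} (h : c u ≠ c w) :
    HasUniquelyColored c {u, w} := by
  refine ⟨u, by simp, ?_⟩
  rintro x (rfl | rfl) hx
  · exact absurd rfl hx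
  · exact h.symm

theorem Color.eq_of_ne_of_ne {a b x : Color} (hab : a ≠ b) (hxa : x ≠ a) : x = b := by
  cases a <;> cases b <;> cases x <;> simp_all

theorem hasUniquelyColored_triple {c : V → Color} {u v w : V}
    (h : ¬(c u = c v ∧ c v = c w)) : HasUniquelyColored c {u, v, w} := by
  by_cases huv : c u = c v
  · refine ⟨w, by simp, ?_⟩
    rintro x (rfl | rfl | rfl) hx
    · exact fun hxw => h ⟨huv, huv ▸ hxw⟩
    · exact fun hxw => h ⟨huv, hxw⟩
    · exact absurd rfl hx
  by_cases hwu : c w = c u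
  · refine ⟨v, by simp, ?_⟩
    rintro x (rfl | rfl | rfl) hx
    · exact huv
    · exact absurd rfl hx
    · exact hwu ▸ huv
  · have hwv : c w = c v := Color.eq_of_ne_of_ne huv hwu
    refine ⟨u, by simp, ?_⟩
    rintro x (rfl | rfl | rfl) hx
    · exact absurd rfl hx
    · exact Ne.symm huv
    · exact hwv ▸ Ne.symm huv

end HasUniquelyColored

def Color.breakTie (a b : Color) : Color :=
  if a = .red ∧ b = .red then .blue else .red

theorem Color.not_mono_breakTie (a b : Color) : ¬(a = b ∧ b = Color.breakTie a b) := by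
  cases a <;> cases b <;> decide

theorem Color.breakTie_eq_blue_iff {a b : Color} :
    Color.breakTie a b = .blue ↔ a = .red ∧ b = .red := by
  cases a <;> cases b <;> decide

theorem oncfGadget_neighborSet_three : oncfGadget.neighborSet 3 = {0, 1, 5} := by
  ext x; fin_cases x <;> simp [oncfGadget]

theorem oncfGadget_neighborSet_four : oncfGadget.neighborSet 4 = {1, 2, 6} := by
  ext x; fin_cases x <;> simp [oncfGadget]

theorem oncfGadget_neighborSet_five : oncfGadget.neighborSet 5 = {3, 7} := by
  ext x; fin_cases x <;> simp [oncfGadget]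

theorem oncfGadget_neighborSet_six : oncfGadget.neighborSet 6 = {4, 7} := by
  ext x; fin_cases x <;> simp [oncfGadget]

theorem oncfGadget_neighborSet_seven : oncfGadget.neighborSet 7 = {5, 6, 8} := by
  ext x; fin_cases x <;> simp [oncfGadget]

theorem oncfGadget_neighborSet_eight : oncfGadget.neighborSet 8 = {7, 9} := by
  ext x; fin_cases x <;> simp [oncfGadget]

/-- Any partial 2-coloring of `g1, g2, g3` of the ONCF-gadget that assigns blue to
at least one of them extends to a 2-coloring of the whole gadget such that the open
neighborhood of every `g_i` with `4 ≤ i ≤ 9` (indices `3 ≤ i ≤ 8`) contains a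
uniquely colored vertex, and moreover `g9` is blue, `g8` is red, `g4`, `g5` and
`g10` are blue. -/
theorem oncfGadget_extension (r1 r2 r3 : Color)
    (hblue : r1 = Color.blue ∨ r2 = Color.blue ∨ r3 = Color.blue) :
    ∃ c : Fin 10 → Color,
      c 0 = r1 ∧ c 1 = r2 ∧ c 2 = r3 ∧
      (∀ i : Fin 10, 3 ≤ i.val → i.val ≤ 8 →
        ∃ u ∈ oncfGadget.neighborSet i,
          ∀ w ∈ oncfGadget.neighborSet i, w ≠ u → c w ≠ c u) ∧
      c 8 = Color.blue ∧ c 7 = Color.red ∧ c 3 = Color.blue ∧ c 4 = Color.blue ∧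
      c 9 = Color.blue := by
  set c : Fin 10 → Color :=
    ![r1, r2, r3, .blue, .blue, r1.breakTie r2, r2.breakTie r3, .red, .blue, .blue]
  have hg8 : ¬(c 5 = c 6 ∧ c 6 = c 8) := by
    rintro ⟨h56, h6⟩
    obtain ⟨rfl, rfl⟩ := Color.breakTie_eq_blue_iff.mp (h56.trans h6)
    obtain ⟨-, rfl⟩ := Color.breakTie_eq_blue_iff.mp h6
    simp at hblue
  refine ⟨c, rfl, rfl, rfl, fun i hi3 hi8 => ?_, rfl, rfl, rfl, rfl, rfl⟩
  fin_cases i <;> simp only [Fin.isValue, Fin.reduceFinMk] at hi3 hi8 ⊢ <;> try omega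
  · rw [oncfGadget_neighborSet_three]
    exact hasUniquelyColored_triple (Color.not_mono_breakTie r1 r2)
  · rw [oncfGadget_neighborSet_four]
    exact hasUniquelyColored_triple (Color.not_mono_breakTie r2 r3)
  · rw [oncfGadget_neighborSet_five]
    exact hasUniquelyColored_pair (by simp [c])
  · rw [oncfGadget_neighborSet_six]
    exact hasUniquelyColored_pair (by simp [c])
  · rw [oncfGadget_neighborSet_seven]
    exact hasUniquelyColored_triple hg8
  · rw [oncfGadget_neighborSet_eight]
    exact hasUniquelyColored_pair (by simp [c])
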